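/- arXiv:1310.8132 — 5 statements merged into one kernel-verified Lean document; each statement's English description precedes it below -/
import Mathlib

section
/- Suppose real sequences x_n, y_n satisfy the recursion x_{n+1} = x_n·y_n - B and y_{n+1} = x_n² - 2 for some constant B ≥ 2. If for some n both |x_n| > B and |x_{n+1}| > B, then |x_m| > B for all m ≥ n. -/
theorem trace_map_escape (x y : ℕ → ℝ) (B : ℝ) (hB : 2 ≤ B)
    (hx : ∀ n, x (n + 1) = x n * y n - B) (hy : ∀ n, y (n + 1) = x n ^ 2 - 2)
    (n : ℕ) (hxn : |x n| > B) (hxn1 : |x (n + 1)| > B) :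
    ∀ m ≥ n, |x m| > B := by
  have hB0 : (0:ℝ) < B := lt_of_lt_of_le two_pos hB
  have key : ∀ k, |x (n + k)| > B ∧ |x (n + k + 1)| > B := by
    intro k
    induction k with
    | zero => exact ⟨hxn, hxn1⟩
    | succ k ih =>
      obtain ⟨h1, h2⟩ := ih
      refine ⟨h2, ?_⟩
      have hsq : x (n + k) ^ 2 > B ^ 2 := by
        nlinarith [sq_abs (x (n + k))]
      have hy2 : y (n + k + 1) ≥ 2 := by
        rw [hy]; nlinarith
      have : x (n + k + 1 + 1) = x (n + k + 1) * y (n + k + 1) - B := hx _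
      rw [show n + (k + 1) + 1 = n + k + 1 + 1 by ring, this]
      have habs : |x (n + k + 1) * y (n + k + 1)| > 2 * B := by
        rw [abs_mul]
        have hy0 : |y (n + k + 1)| ≥ 2 := le_trans hy2 (le_abs_self _)
        nlinarith [abs_nonneg (x (n + k + 1))]
      have habs' : |x (n + k + 1) * y (n + k + 1)| ≥ 2 * B := le_of_lt habs
      calc |x (n + k + 1) * y (n + k + 1) - B|
          ≥ |x (n + k + 1) * y (n + k + 1)| - |B| := abs_sub_abs_le_abs_sub _ _
        _ > B := by rw [abs_of_pos hB0]; linarith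
  intro m hm
  obtain ⟨k, rfl⟩ := Nat.exists_eq_add_of_le hm
  exact (key k).1
end

section
/- Suppose real sequences x_n, y_n satisfy x_{n+1} = x_n·y_n - B and y_{n+1} = x_n² - 2 with B ≥ 2. If x_n < -B and y_n > 2 for some n, then x_{n+1} < -B and y_{n+1} > 2, hence |x_m| > B for all m ≥ n. -/
lemma trace_step (a b B : ℝ) (hB : 2 ≤ B) (ha : a < -B) (hb : b > 2) :
    a * b - B < -B ∧ a ^ 2 - 2 > 2 := by
  constructor
  · nlinarith
  · nlinarith

theorem trace_map_Dminus_invariant (x y : ℕ → ℝ) (B : ℝ) (hB : 2 ≤ B)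
    (hx : ∀ n, x (n + 1) = x n * y n - B) (hy : ∀ n, y (n + 1) = x n ^ 2 - 2)
    (n : ℕ) (hxn : x n < -B) (hyn : y n > 2) :
    (x (n + 1) < -B ∧ y (n + 1) > 2) ∧ ∀ m ≥ n, |x m| > B := by
  have key : ∀ k, x (n + k) < -B ∧ y (n + k) > 2 := by
    intro k
    induction k with
    | zero => exact ⟨hxn, hyn⟩
    | succ k ih =>
      have h := trace_step (x (n + k)) (y (n + k)) B hB ih.1 ih.2
      rw [show n + (k + 1) = (n + k) + 1 from rfl, hx, hy]
      exact h
  refine ⟨key 1, fun m hm => ?_⟩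
  obtain ⟨k, rfl⟩ := Nat.exists_eq_add_of_le hm
  have h := (key k).1
  calc B < -x (n + k) := by linarith
    _ ≤ |x (n + k)| := neg_le_abs _
end

section
/- Let M ∈ SL(2,ℂ) with |tr M| ≤ C for some C ≥ 1, and let x ∈ ℂ² with ‖x‖ = 1. Then max(‖M²x‖, ‖Mx‖) ≥ (1/2)·min(1, 1/C). -/
/-!
By Cayley–Hamilton, `M² x = tr M • M x - x` when `det M = 1`, so
`1 = ‖x‖ ≤ |tr M| ‖M x‖ + ‖M² x‖ ≤ (C + 1) max (‖M² x‖, ‖M x‖)`, and `1 / (C + 1)` dominates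
`min (1, 1/C) / 2`.
-/

namespace Matrix

theorem sq_eq_trace_smul_sub_det_smul {n R : Type*} [Fintype n] [DecidableEq n] [CommRing R]
    (M : Matrix n n R) (hn : Fintype.card n = 2) :
    M ^ 2 = M.trace • M - M.det • 1 := by
  cases subsingleton_or_nontrivial R
  · exact Subsingleton.elim _ _
  have h := M.aeval_self_charpoly
  rw [charpoly_of_card_eq_two (M := M) hn] at h
  simp only [map_add, map_sub, map_mul, map_pow, Polynomial.aeval_X, Polynomial.aeval_C,
    algebraMap_eq_diagonal, Pi.algebraMap_def, Algebra.algebraMap_self, RingHom.id_apply] at h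
  rw [← sub_eq_zero, ← h, smul_eq_diagonal_mul, smul_eq_diagonal_mul, ← diagonal_one,
    diagonal_mul_diagonal, mul_one]
  abel

end Matrix

theorem norm_le_mul_max_of_eq_smul_sub {𝕜 E : Type*} [NormedField 𝕜] [SeminormedAddCommGroup E]
    [NormedSpace 𝕜 E] {x y z : E} (t : 𝕜) (h : z = t • y - x) :
    ‖x‖ ≤ (‖t‖ + 1) * max ‖z‖ ‖y‖ := by
  have hx : x = t • y - z := by rw [h]; abel
  calc ‖x‖ ≤ ‖t‖ * ‖y‖ + ‖z‖ := by rw [hx, ← norm_smul]; exact norm_sub_le _ _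
    _ ≤ ‖t‖ * max ‖z‖ ‖y‖ + max ‖z‖ ‖y‖ := by gcongr <;> simp
    _ = (‖t‖ + 1) * max ‖z‖ ‖y‖ := by ring

theorem half_mul_min_one_inv_le_inv_add_one {C : ℝ} (hC : 0 ≤ C) :
    1 / 2 * min 1 (1 / C) ≤ 1 / (C + 1) := by
  rcases le_total C 1 with hC1 | hC1
  · calc 1 / 2 * min 1 (1 / C) ≤ 1 / 2 * 1 := by gcongr; exact min_le_left _ _
      _ ≤ 1 / (C + 1) := by rw [le_div_iff₀ (by positivity)]; linarith
  · calc 1 / 2 * min 1 (1 / C) ≤ 1 / 2 * (1 / C) := by gcongr; exact min_le_right _ _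
      _ ≤ 1 / (C + 1) := by
        rw [div_mul_div_comm, one_mul]
        exact one_div_le_one_div_of_le (by positivity) (by linarith)

theorem two_block_gordon_estimate_general (M : Matrix (Fin 2) (Fin 2) ℂ) (hM : M.det = 1)
    (C : ℝ) (htr : ‖M.trace‖ ≤ C)
    (x : EuclideanSpace ℂ (Fin 2)) (hx : ‖x‖ = 1) :
    max ‖Matrix.toEuclideanLin (M ^ 2) x‖ ‖Matrix.toEuclideanLin M x‖ ≥
      (1 / 2) * min 1 (1 / C) := by
  have hCH : M ^ 2 = M.trace • M - 1 := by
    rw [M.sq_eq_trace_smul_sub_det_smul (Fintype.card_fin 2), hM, one_smul]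
  have hsq : Matrix.toEuclideanLin (M ^ 2) x = M.trace • Matrix.toEuclideanLin M x - x := by
    simp [hCH]
  have hC : 0 ≤ C := (norm_nonneg _).trans htr
  have hmax : 1 ≤ (C + 1) * max ‖Matrix.toEuclideanLin (M ^ 2) x‖ ‖Matrix.toEuclideanLin M x‖ :=
    calc 1 = ‖x‖ := hx.symm
      _ ≤ (‖M.trace‖ + 1) * max _ _ := norm_le_mul_max_of_eq_smul_sub _ hsq
      _ ≤ _ := by gcongr
  calc 1 / 2 * min 1 (1 / C) ≤ 1 / (C + 1) := half_mul_min_one_inv_le_inv_add_one hC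
    _ ≤ _ := by rw [div_le_iff₀' (by positivity)]; exact hmax

theorem two_block_gordon_estimate (M : Matrix (Fin 2) (Fin 2) ℂ) (hM : M.det = 1)
    (C : ℝ) (hC : 1 ≤ C) (htr : ‖M.trace‖ ≤ C)
    (x : EuclideanSpace ℂ (Fin 2)) (hx : ‖x‖ = 1) :
    max ‖Matrix.toEuclideanLin (M ^ 2) x‖ ‖Matrix.toEuclideanLin M x‖ ≥
      (1 / 2) * min 1 (1 / C) :=
  two_block_gordon_estimate_general M hM C htr x hx
end

section
/- Let M ∈ SL(2,ℂ) with |tr M| > 1, and let x ∈ ℂ² with ‖x‖ = 1. Then max(‖Mx‖, ‖M^{-1}x‖) ≥ 1/2. -/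
/-!
For `M ∈ SL(2, ℂ)` Cayley–Hamilton reads `M + M⁻¹ = tr M • 1`, so `Mx + M⁻¹x = tr M • x`.
For a unit vector `x` the triangle inequality gives `|tr M| ≤ ‖Mx‖ + ‖M⁻¹x‖ ≤ 2 max(‖Mx‖, ‖M⁻¹x‖)`,
and `|tr M| > 1` finishes the estimate.
-/

namespace Matrix

variable {R : Type*} [CommRing R]

theorem adjugate_fin_two_eq_trace_smul_one_sub (A : Matrix (Fin 2) (Fin 2) R) :
    A.adjugate = A.trace • (1 : Matrix (Fin 2) (Fin 2) R) - A := by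
  ext i j
  fin_cases i <;> fin_cases j <;> simp [adjugate_fin_two, trace_fin_two]

theorem inv_eq_trace_smul_one_sub_of_det_eq_one {A : Matrix (Fin 2) (Fin 2) R} (hA : A.det = 1) :
    A⁻¹ = A.trace • (1 : Matrix (Fin 2) (Fin 2) R) - A := by
  rw [inv_def, hA, Ring.inverse_one, one_smul, adjugate_fin_two_eq_trace_smul_one_sub]

theorem toEuclideanLin_add_toEuclideanLin_inv_of_det_eq_one {𝕜 : Type*} [RCLike 𝕜]
    {A : Matrix (Fin 2) (Fin 2) 𝕜} (hA : A.det = 1) (x : EuclideanSpace 𝕜 (Fin 2)) :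
    toEuclideanLin A x + toEuclideanLin A⁻¹ x = A.trace • x := by
  rw [inv_eq_trace_smul_one_sub_of_det_eq_one hA, map_sub, map_smul]
  simp

end Matrix

theorem norm_add_le_two_mul_max {E : Type*} [SeminormedAddGroup E] (u v : E) :
    ‖u + v‖ ≤ 2 * max ‖u‖ ‖v‖ :=
  calc ‖u + v‖ ≤ ‖u‖ + ‖v‖ := norm_add_le u v
    _ ≤ 2 * max ‖u‖ ‖v‖ := by linarith [le_max_left ‖u‖ ‖v‖, le_max_right ‖u‖ ‖v‖]

theorem three_block_gordon_estimate (M : Matrix (Fin 2) (Fin 2) ℂ) (hM : M.det = 1)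
    (htr : ‖M.trace‖ > 1)
    (x : EuclideanSpace ℂ (Fin 2)) (hx : ‖x‖ = 1) :
    max ‖Matrix.toEuclideanLin M x‖ ‖Matrix.toEuclideanLin M⁻¹ x‖ ≥ 1 / 2 := by
  have htr_le : ‖M.trace‖ ≤ 2 * max ‖Matrix.toEuclideanLin M x‖ ‖Matrix.toEuclideanLin M⁻¹ x‖ :=
    calc ‖M.trace‖ = ‖M.trace • x‖ := by rw [norm_smul, hx, mul_one]
      _ = ‖Matrix.toEuclideanLin M x + Matrix.toEuclideanLin M⁻¹ x‖ := by
        rw [Matrix.toEuclideanLin_add_toEuclideanLin_inv_of_det_eq_one hM]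
      _ ≤ _ := norm_add_le_two_mul_max _ _
  linarith
end

section
/- Let A, B be 2x2 matrices with determinant 1, and define sequences of matrices by A_{n+1} = B_n·A_n, B_{n+1} = A_n·A_n with A_1 = A, B_1 = B. Then tr(B_{n+1}·A_{n+1}^{-1}) = tr(B_n·A_n^{-1}) for all n ≥ 1; in particular tr(B_n·A_n^{-1}) = tr(B·A^{-1}) for all n ≥ 1. -/
lemma inv_eq_adj_of_det_one (M : Matrix (Fin 2) (Fin 2) ℂ) (h : M.det = 1) :
    M⁻¹ = M.adjugate := by
  rw [Matrix.inv_def, h]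
  simp

lemma trace_mul_inv_symm (M N : Matrix (Fin 2) (Fin 2) ℂ) (hM : M.det = 1)
    (hN : N.det = 1) : (M * N⁻¹).trace = (N * M⁻¹).trace := by
  rw [inv_eq_adj_of_det_one M hM, inv_eq_adj_of_det_one N hN,
    Matrix.adjugate_fin_two, Matrix.adjugate_fin_two]
  simp [Matrix.trace_fin_two, Matrix.mul_apply, Fin.sum_univ_two]
  ring

theorem trace_invariant_period_doubling
    (A B : Matrix (Fin 2) (Fin 2) ℂ) (hA : A.det = 1) (hB : B.det = 1)
    (An Bn : ℕ → Matrix (Fin 2) (Fin 2) ℂ) (hA1 : An 1 = A) (hB1 : Bn 1 = B)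
    (hArec : ∀ n ≥ 1, An (n + 1) = Bn n * An n)
    (hBrec : ∀ n ≥ 1, Bn (n + 1) = An n * An n) :
    (∀ n ≥ 1, (Bn (n + 1) * (An (n + 1))⁻¹).trace = (Bn n * (An n)⁻¹).trace) ∧
      ∀ n ≥ 1, (Bn n * (An n)⁻¹).trace = (B * A⁻¹).trace := by
  have hdet : ∀ n ≥ 1, (An n).det = 1 ∧ (Bn n).det = 1 := by
    intro n hn
    induction n, hn using Nat.le_induction with
    | base => simp [hA1, hB1, hA, hB]
    | succ n hn ih =>
      rw [hArec n hn, hBrec n hn, Matrix.det_mul, Matrix.det_mul, ih.1, ih.2]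
      simp
  have step : ∀ n ≥ 1,
      (Bn (n + 1) * (An (n + 1))⁻¹).trace = (Bn n * (An n)⁻¹).trace := by
    intro n hn
    obtain ⟨hAd, hBd⟩ := hdet n hn
    have hinv : An n * (An n)⁻¹ = 1 := by
      apply Matrix.mul_nonsing_inv
      rw [hAd]; exact isUnit_one
    have : Bn (n + 1) * (An (n + 1))⁻¹ = An n * (Bn n)⁻¹ := by
      rw [hArec n hn, hBrec n hn, Matrix.mul_inv_rev, ← mul_assoc, mul_assoc (An n),
        hinv, mul_one]
    rw [this, trace_mul_inv_symm _ _ hAd hBd]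
  refine ⟨step, ?_⟩
  intro n hn
  induction n, hn using Nat.le_induction with
  | base => rw [hA1, hB1]
  | succ n hn ih => rw [step n hn, ih]
end
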